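/- arXiv:1504.00960 — 3 statements merged into one kernel-verified Lean document; each statement's English description precedes it below -/
import Mathlib

section
/- Degeneracy limit of divided differences of an entire function. Let c : ℕ → ℂ satisfy ∑_m |c_m| r^m < ∞ for every r ≥ 0, set f(z) = ∑'_m c_m z^m, and for M ≥ 1 define f^{[M]}(x₀,…,x_M) = ∑'_N c_{M+N} h_N(x₀,…,x_M). Then for every M ≥ 1 and every ξ ∈ ℂ, the divided difference at M+1 coincident arguments satisfies f^{[M]}(ξ, ξ, …, ξ) = (1/M!) · f^{(M)}(ξ), where f^{(M)} denotes the M-th iterated complex derivative of f. -/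
/-- The complete homogeneous symmetric polynomial of degree `N` in the
variables `x 0, …, x (M-1)`: the sum of all monomials of total degree `N`. -/
noncomputable def hsym {R : Type*} [CommSemiring R] {M : ℕ} (N : ℕ) (x : Fin M → R) : R :=
  ∑ a ∈ Finset.Nat.antidiagonalTuple M N, ∏ i, x i ^ a i

/-!
Termwise differentiation is legitimate for an entire power series, so differentiating
`∑ c_m z^m` `M` times gives `∑_N (N+1)⋯(N+M) c_{M+N} z^N = M! ∑_N C(M+N, N) c_{M+N} z^N`.
On the other side, `h_N(ξ, …, ξ)` with `M + 1` arguments is `ξ^N` times the number of monomials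
of degree `N` in `M + 1` variables, which is `C(M+N, N)`; the two series agree term by term.
-/

open Finset

theorem Finset.Nat.card_antidiagonalTuple (k n : ℕ) :
    #(Finset.Nat.antidiagonalTuple k n) = k.multichoose n := by
  rw [← piAntidiag_univ_fin_eq_antidiagonalTuple]
  simpa [finsuppAntidiag] using card_finsuppAntidiag_nat_eq_multichoose (s := univ (α := Fin k)) n

theorem hsym_const {R : Type*} [CommSemiring R] (k N : ℕ) (x : R) :
    hsym N (fun _ : Fin k => x) = k.multichoose N * x ^ N := by
  rw [hsym, ← Finset.Nat.card_antidiagonalTuple, ← nsmul_eq_mul, ← sum_const]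
  refine sum_congr rfl fun a ha => ?_
  rw [prod_pow_eq_pow_sum, Finset.Nat.mem_antidiagonalTuple.1 ha]

theorem Nat.add_descFactorial_eq_factorial_mul_multichoose (k n : ℕ) :
    (n + k).descFactorial k = k.factorial * (k + 1).multichoose n := by
  rw [descFactorial_eq_factorial_mul_choose, multichoose_eq, Nat.add_right_comm,
    add_tsub_cancel_right, add_comm k n, choose_symm_add]

def derivCoeff {R : Type*} [Semiring R] (c : ℕ → R) (m : ℕ) : R := (m + 1) * c (m + 1)

theorem iterate_derivCoeff_apply {R : Type*} [CommSemiring R] (c : ℕ → R) (k m : ℕ) :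
    derivCoeff^[k] c m = (m + k).descFactorial k * c (m + k) := by
  induction k generalizing c with
  | zero => simp
  | succ k ih =>
    rw [Function.iterate_succ_apply, ih, derivCoeff, ← add_assoc, Nat.succ_descFactorial_succ]
    push_cast
    ring

theorem succ_mul_pow_le_two_mul_add_one_pow {r : ℝ} (hr : 0 ≤ r) (m : ℕ) :
    (m + 1) * r ^ m ≤ (2 * (r + 1)) ^ (m + 1) := by
  have hm : (m + 1 : ℝ) ≤ 2 ^ (m + 1) := by exact_mod_cast Nat.lt_two_pow_self.le
  have hr' : r ^ m ≤ (r + 1) ^ (m + 1) :=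
    (pow_le_pow_left₀ hr (by linarith) m).trans (pow_le_pow_right₀ (by linarith) m.le_succ)
  rw [mul_pow]
  gcongr

section PowerSeries

variable {𝕜 : Type*} [RCLike 𝕜]

def IsEntireCoeffs (c : ℕ → 𝕜) : Prop :=
  ∀ r : ℝ, 0 ≤ r → Summable fun m : ℕ => ‖c m‖ * r ^ m

theorem isEntireCoeffs_derivCoeff {c : ℕ → 𝕜} (hc : IsEntireCoeffs c) :
    IsEntireCoeffs (derivCoeff c) := by
  intro r hr
  refine ((summable_nat_add_iff 1).2 (hc (2 * (r + 1)) (by positivity))).of_nonneg_of_le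
    (fun m => by positivity) fun m => ?_
  rw [derivCoeff, norm_mul, ← Nat.cast_add_one, RCLike.norm_natCast, mul_right_comm,
    mul_comm ‖c (m + 1)‖, Nat.cast_add_one]
  gcongr
  exact succ_mul_pow_le_two_mul_add_one_pow hr m

namespace IsEntireCoeffs

variable {c : ℕ → 𝕜}

theorem summable_mul_pow (hc : IsEntireCoeffs c) (z : 𝕜) : Summable fun m : ℕ => c m * z ^ m :=
  .of_norm <| by simpa only [norm_mul, norm_pow] using hc ‖z‖ (norm_nonneg z)

theorem hasDerivAt_tsum_mul_pow (hc : IsEntireCoeffs c) (z : 𝕜) :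
    HasDerivAt (fun w => ∑' m, c m * w ^ m) (∑' m, derivCoeff c m * z ^ m) z := by
  set R := ‖z‖ + 1
  have hz : z ∈ Metric.ball (0 : 𝕜) R := by simp [R]
  have hbound : ∀ n, ∀ y ∈ Metric.ball (0 : 𝕜) R,
      ‖c n * (n * y ^ (n - 1))‖ ≤ ‖c n‖ * n * R ^ (n - 1) := by
    intro n y hy
    rw [mem_ball_zero_iff] at hy
    rw [norm_mul, norm_mul, norm_pow, RCLike.norm_natCast, ← mul_assoc]
    gcongr
  have hu : Summable fun n : ℕ => ‖c n‖ * n * R ^ (n - 1) := by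
    refine (summable_nat_add_iff 1).1
      ((isEntireCoeffs_derivCoeff hc R (by positivity)).congr fun m => ?_)
    rw [derivCoeff, norm_mul, ← Nat.cast_add_one, RCLike.norm_natCast, add_tsub_cancel_right]
    ring
  have hderiv := hasDerivAt_tsum_of_isPreconnected hu Metric.isOpen_ball
    (convex_ball 0 R).isPreconnected (fun n y _ => (hasDerivAt_pow n y).const_mul (c n)) hbound hz
    (hc.summable_mul_pow z) hz
  refine hderiv.congr_deriv ?_
  have hshift : ∀ m : ℕ,
      c (m + 1) * ((m + 1 : ℕ) * z ^ (m + 1 - 1)) = derivCoeff c m * z ^ m := by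
    intro m
    rw [derivCoeff, add_tsub_cancel_right]
    push_cast
    ring
  rw [tsum_eq_zero_add' ?_]
  · simp only [hshift, CharP.cast_eq_zero, zero_mul, mul_zero, zero_add]
  · simpa only [hshift] using (isEntireCoeffs_derivCoeff hc).summable_mul_pow z

theorem deriv_tsum_mul_pow (hc : IsEntireCoeffs c) :
    deriv (fun z => ∑' m, c m * z ^ m) = fun z => ∑' m, derivCoeff c m * z ^ m :=
  funext fun z => (hc.hasDerivAt_tsum_mul_pow z).deriv

theorem iteratedDeriv_tsum_mul_pow (hc : IsEntireCoeffs c) (k : ℕ) :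
    iteratedDeriv k (fun z => ∑' m, c m * z ^ m) =
      fun z => ∑' m, derivCoeff^[k] c m * z ^ m := by
  induction k generalizing c with
  | zero => rfl
  | succ k ih =>
    rw [iteratedDeriv_succ', hc.deriv_tsum_mul_pow, ih (isEntireCoeffs_derivCoeff hc),
      Function.iterate_succ_apply]

end IsEntireCoeffs

end PowerSeries

theorem dividedDifference_degenerate_general (c : ℕ → ℂ)
    (hc : ∀ r : ℝ, 0 ≤ r → Summable fun m : ℕ => ‖c m‖ * r ^ m)
    (M : ℕ) (ξ : ℂ) :
    (∑' N : ℕ, c (M + N) * hsym N (fun _ : Fin (M + 1) => ξ)) =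
      (1 / (M.factorial : ℂ)) *
        iteratedDeriv M (fun z : ℂ => ∑' m : ℕ, c m * z ^ m) ξ := by
  rw [IsEntireCoeffs.iteratedDeriv_tsum_mul_pow hc, ← tsum_mul_left]
  refine tsum_congr fun N => ?_
  rw [iterate_derivCoeff_apply, hsym_const, Nat.add_descFactorial_eq_factorial_mul_multichoose,
    add_comm N M]
  have hfact : (M.factorial : ℂ) ≠ 0 := Nat.cast_ne_zero.2 M.factorial_ne_zero
  push_cast
  field_simp

/-- **Degeneracy limit of divided differences of an entire function.**
Let `c : ℕ → ℂ` satisfy `∑_m |c_m| r^m < ∞` for every `r ≥ 0`, set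
`f(z) = ∑'_m c_m z^m` and `f^{[M]}(x₀,…,x_M) = ∑'_N c_{M+N} h_N(x₀,…,x_M)`.
Then for every `M ≥ 1` and `ξ ∈ ℂ`,
`f^{[M]}(ξ, …, ξ) = (1/M!) · f^{(M)}(ξ)` (with `M+1` coincident arguments,
`f^{(M)}` being the `M`-th iterated complex derivative of `f`). -/
theorem dividedDifference_degenerate (c : ℕ → ℂ)
    (hc : ∀ r : ℝ, 0 ≤ r → Summable fun m : ℕ => ‖c m‖ * r ^ m)
    (M : ℕ) (hM : 1 ≤ M) (ξ : ℂ) :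
    (∑' N : ℕ, c (M + N) * hsym N (fun _ : Fin (M + 1) => ξ)) =
      (1 / (M.factorial : ℂ)) *
        iteratedDeriv M (fun z : ℂ => ∑' m : ℕ, c m * z ^ m) ξ :=
  dividedDifference_degenerate_general c hc M ξ
end

section
/- Power-series definition of a Hermitian matrix function agrees with the spectral definition. Let ι be a finite type, A an ι×ι complex Hermitian matrix with spectral decomposition A = U · diag(λ₁,…,λ_n) · U*, where U is the unitary matrix of eigenvectors and λ_i the (real) eigenvalues of A, and let c : ℕ → ℂ satisfy ∑_m |c_m| r^m < ∞ for every r ≥ 0. Then the series ∑_m c_m A^m has sum (converging entrywise) equal to U · diag(f(λ₁),…,f(λ_n)) · U*, where f(x) = ∑'_m c_m x^m. -/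
/-!
Conjugation by a unitary commutes with powers, so `c m • A ^ m = U * diagonal (c m * λ ^ m) * Uᴴ`;
the series of diagonal matrices converges entrywise because each scalar series converges
absolutely, and multiplying by `U` and `Uᴴ` is continuous.
-/

open Matrix

theorem unitary_conj_pow {R : Type*} [Monoid R] [StarMul R] {U : R} (hU : U ∈ unitary R)
    (x : R) (n : ℕ) : (U * x * star U) ^ n = U * x ^ n * star U :=
  (Unitary.toUnits ⟨U, hU⟩).conj_pow x n

theorem summable_mul_pow_of_summable_norm_mul_pow {𝕜 : Type*} [NormedDivisionRing 𝕜]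
    [CompleteSpace 𝕜] {c : ℕ → 𝕜} {x : 𝕜} (hc : Summable fun m => ‖c m‖ * ‖x‖ ^ m) :
    Summable fun m => c m * x ^ m :=
  .of_norm (by simpa only [norm_mul, norm_pow] using hc)

theorem hasSum_smul_pow_unitary_conj_diagonal {ι 𝕜 : Type*} [Fintype ι] [DecidableEq ι]
    [CommRing 𝕜] [StarRing 𝕜] [TopologicalSpace 𝕜] [IsTopologicalRing 𝕜]
    {U : Matrix ι ι 𝕜} (hU : U ∈ unitaryGroup ι 𝕜) {d f : ι → 𝕜} {c : ℕ → 𝕜}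
    (h : ∀ i, HasSum (fun m => c m * d i ^ m) (f i)) :
    HasSum (fun m => c m • (U * diagonal d * Uᴴ) ^ m) (U * diagonal f * Uᴴ) := by
  have hdiag : HasSum (fun m => diagonal fun i => c m * d i ^ m) (diagonal f) :=
    (Pi.hasSum.2 h).matrix_diagonal
  have hterm (m : ℕ) :
      c m • (U * diagonal d * Uᴴ) ^ m = U * diagonal (fun i => c m * d i ^ m) * Uᴴ := by
    rw [← star_eq_conjTranspose, unitary_conj_pow hU, diagonal_pow, ← Matrix.smul_mul, ← Matrix.mul_smul, ← diagonal_smul]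
    rfl
  simp only [hterm]
  exact (hdiag.mul_left U).mul_right Uᴴ

theorem matrixFunction_powerSeries_eq_spectral_general {ι : Type*} [Fintype ι] [DecidableEq ι]
    (A U : Matrix ι ι ℂ) (hU : U ∈ Matrix.unitaryGroup ι ℂ)
    (lam : ι → ℝ)
    (hspec : A = U * Matrix.diagonal (fun i => (lam i : ℂ)) * Uᴴ)
    (c : ℕ → ℂ) (hc : ∀ r : ℝ, 0 ≤ r → Summable fun m : ℕ => ‖c m‖ * r ^ m)
    (I J : ι) :
    HasSum (fun m : ℕ => c m * (A ^ m) I J)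
      ((U * Matrix.diagonal (fun i => ∑' m : ℕ, c m * (lam i : ℂ) ^ m) * Uᴴ) I J) := by
  have hseries := hasSum_smul_pow_unitary_conj_diagonal hU fun i =>
    (summable_mul_pow_of_summable_norm_mul_pow (hc _ (norm_nonneg (lam i : ℂ)))).hasSum
  subst hspec
  exact Pi.hasSum.1 (Pi.hasSum.1 hseries I) J

/-- **Power-series definition of a Hermitian matrix function agrees with the
spectral definition.**  Let `A` be a Hermitian complex matrix with spectral
decomposition `A = U · diag(λ) · U*` (`U` unitary, `λ` real), and let
`c : ℕ → ℂ` satisfy `∑_m |c_m| r^m < ∞` for every `r ≥ 0`.  Then the series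
`∑_m c_m A^m` converges entrywise to `U · diag(f(λ₁),…,f(λ_n)) · U*`, where
`f(x) = ∑'_m c_m x^m`. -/
theorem matrixFunction_powerSeries_eq_spectral {ι : Type*} [Fintype ι] [DecidableEq ι]
    (A U : Matrix ι ι ℂ) (hA : A.IsHermitian) (hU : U ∈ Matrix.unitaryGroup ι ℂ)
    (lam : ι → ℝ)
    (hspec : A = U * Matrix.diagonal (fun i => (lam i : ℂ)) * Uᴴ)
    (c : ℕ → ℂ) (hc : ∀ r : ℝ, 0 ≤ r → Summable fun m : ℕ => ‖c m‖ * r ^ m)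
    (I J : ι) :
    HasSum (fun m : ℕ => c m * (A ^ m) I J)
      ((U * Matrix.diagonal (fun i => ∑' m : ℕ, c m * (lam i : ℂ) ^ m) * Uᴴ) I J) :=
  matrixFunction_powerSeries_eq_spectral_general A U hU lam hspec c hc I J
end

section
/- Bound on the M-th order term of the flavour expansion of a master one-loop integral. Let ι be a finite type, let D : ι → ℝ take positive values, let Â be an ι×ι complex Hermitian matrix with zero diagonal, let p ≥ 2 and let b₁,…,b_p be positive reals. Define the mass-insertion matrix Q by Q_{IJ} = |Â_{IJ}| / √(D_I · D_J). Then for every M ≥ 1 and all indices I, J: ∑_{K₁,…,K_{M−1} ∈ ι} J_{M+1+p}(D_I, D_J, D_{K₁}, …, D_{K_{M−1}}, b₁,…,b_p) · |Â_{IK₁}| · |Â_{K₁K₂}| ⋯ |Â_{K_{M−1}J}| ≤ J_{1+p}(D_I, b₁,…,b_p) · √(D_I / D_J) · (Q^M)_{IJ}, where (Q^M)_{IJ} is the (I,J) entry of the M-th power of the matrix Q. -/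
open Matrix

/-- The zero-momentum master one-loop integral
`Jₙ(a₁,…,a_n) = ∫₀^∞ u / ∏_{j=1}^n (u + a_j) du`. -/
noncomputable def Jint {n : ℕ} (a : Fin n → ℝ) : ℝ :=
  ∫ u in Set.Ioi (0 : ℝ), u / ∏ j, (u + a j)

/-- The product of matrix entries of `B` along the chain
`I → K 0 → K 1 → ⋯ → K (m-1) → J` (for `m = 0` it is just `B I J`). -/
def pathProd {R : Type*} [CommMonoid R] {ι : Type*} (B : Matrix ι ι R) (I J : ι)
    {m : ℕ} (K : Fin m → ι) : R :=
  let nodes : Fin (m + 2) → ι := Fin.cons I (Fin.snoc K J)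
  ∏ i : Fin (m + 1), B (nodes i.castSucc) (nodes i.succ)

/-!
Each summand is bounded on its own. For `u > 0` we have `u + a ≥ a`, so removing the factors
`(u + D_J)(u + D_{K₁})⋯(u + D_{K_{M-1}})` from the integrand of `J_{M+1+p}` loses at most
the factor `(D_J ∏ D_{K_i})⁻¹`; what is left is the integrand of `J_{1+p}(D_I, b)`, which is
integrable since `p ≥ 2`. On the other side, `(Q^M)_{IJ}` is the sum over paths
`I → K₁ → ⋯ → J` of the products of `|Â_{KL}| / (√D_K √D_L)`; every interior vertex occurs
twice, so the weight of a path is its `|Â|`-product divided by `√D_I √D_J ∏ D_{K_i}`, and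
`√(D_I / D_J)` turns `√D_I √D_J` into `D_J`.
-/

open MeasureTheory Set

section Integral

variable {n n' : ℕ}

lemma integrableOn_Ioi_div_prod_add (hn : 3 ≤ n) {a : Fin n → ℝ} (ha : ∀ j, 0 < a j) :
    IntegrableOn (fun u : ℝ => u / ∏ j, (u + a j)) (Ioi 0) := by
  have : Nonempty (Fin n) := ⟨⟨0, by omega⟩⟩
  obtain ⟨j₀, hj₀⟩ := Finite.exists_min a
  set c := a j₀
  have hc : 0 < c := ha j₀
  have hexp : (1 : ℝ) - n < -1 := by
    have : (3 : ℝ) ≤ n := by exact_mod_cast hn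
    linarith
  have hmajor : IntegrableOn (fun u : ℝ => (u + c) ^ ((1 : ℝ) - n)) (Ioi 0) :=
    integrableOn_add_rpow_Ioi_of_lt hexp (by linarith)
  refine hmajor.mono' (by fun_prop : Measurable _).aestronglyMeasurable ?_
  filter_upwards [ae_restrict_mem measurableSet_Ioi] with u (hu : 0 < u)
  have hprod : (u + c) ^ n ≤ ∏ j, (u + a j) := by
    simpa using Finset.prod_le_prod (s := Finset.univ) (fun _ _ => by positivity)
      (fun j _ => by linarith [hj₀ j] : ∀ j ∈ Finset.univ, u + c ≤ u + a j)
  have hprod_pos : 0 < ∏ j, (u + a j) := (by positivity : (0 : ℝ) < (u + c) ^ n).trans_le hprod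
  rw [Real.norm_of_nonneg (by positivity), Real.rpow_sub (by positivity), Real.rpow_one,
    Real.rpow_natCast]
  calc u / ∏ j, (u + a j) ≤ u / (u + c) ^ n := by gcongr
    _ ≤ (u + c) / (u + c) ^ n := by gcongr; linarith

lemma Jint_le_inv_mul_Jint {a : Fin n → ℝ} {a' : Fin n' → ℝ} {C : ℝ} (hC : 0 < C)
    (hn' : 3 ≤ n') (ha' : ∀ j, 0 < a' j)
    (hprod : ∀ u, 0 < u → C * ∏ j, (u + a' j) ≤ ∏ j, (u + a j)) :
    Jint a ≤ C⁻¹ * Jint a' := by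
  have hpos : ∀ u, 0 < u → 0 < C * ∏ j, (u + a' j) := fun u hu =>
    mul_pos hC (Finset.prod_pos fun j _ => by linarith [ha' j])
  rw [Jint, Jint, ← integral_const_mul]
  refine integral_mono_of_nonneg ?_ ((integrableOn_Ioi_div_prod_add hn' ha').const_mul _) ?_
  all_goals filter_upwards [ae_restrict_mem measurableSet_Ioi] with u (hu : 0 < u)
  · exact div_nonneg hu.le ((hpos u hu).trans_le (hprod u hu)).le
  · rw [← mul_div_assoc, inv_mul_eq_div, div_div]
    exact div_le_div_of_nonneg_left hu.le (hpos u hu) (hprod u hu)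

lemma Jint_cons_append_le {p k : ℕ} (hp : 2 ≤ p) {x : ℝ} (hx : 0 < x) {c : Fin k → ℝ}
    (hc : ∀ j, 0 < c j) {b : Fin p → ℝ} (hb : ∀ j, 0 < b j) :
    Jint (Fin.append (Fin.cons x c) b) ≤ (∏ j, c j)⁻¹ * Jint (Fin.cons x b) := by
  refine Jint_le_inv_mul_Jint (Finset.prod_pos fun j _ => hc j) (by omega)
    (fun j => Fin.cases hx hb j) fun u hu => ?_
  have hcu : ∏ j, c j ≤ ∏ j, (u + c j) :=
    Finset.prod_le_prod (fun j _ => (hc j).le) fun j _ => by linarith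
  have hb_pos : 0 < ∏ j, (u + b j) := Finset.prod_pos fun j _ => by linarith [hb j]
  rw [Fin.prod_univ_add (f := fun j => u + Fin.append (Fin.cons x c) b j)]
  simp only [Fin.append_left, Fin.append_right, Fin.prod_univ_succ, Fin.cons_zero, Fin.cons_succ]
  calc (∏ j, c j) * ((u + x) * ∏ j, (u + b j))
      ≤ (∏ j, (u + c j)) * ((u + x) * ∏ j, (u + b j)) := by gcongr
    _ = (u + x) * (∏ j, (u + c j)) * ∏ j, (u + b j) := by ring

end Integral

section PathProd

variable {ι R : Type*}

@[simp]
lemma pathProd_zero [CommMonoid R] (B : Matrix ι ι R) (I J : ι) (K : Fin 0 → ι) :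
    pathProd B I J K = B I J := by
  simp [pathProd, Fin.snoc]

lemma pathProd_cons [CommMonoid R] (B : Matrix ι ι R) (I J k : ι) {m : ℕ} (K : Fin m → ι) :
    pathProd B I J (Fin.cons k K) = B I k * pathProd B k J K := by
  simp [pathProd, Fin.prod_univ_succ _ (n := m + 1), ← Fin.cons_snoc_eq_snoc_cons]

lemma pathProd_nonneg [CommMonoidWithZero R] [PartialOrder R] [ZeroLEOneClass R]
    [PosMulMono R] {B : Matrix ι ι R}
    (hB : ∀ i j, 0 ≤ B i j) (I J : ι) {m : ℕ} (K : Fin m → ι) : 0 ≤ pathProd B I J K :=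
  Finset.prod_nonneg fun _ _ => hB _ _

lemma pathProd_diagonal_mul_mul_diagonal [CommMonoid R] (d : ι → R) (B : Matrix ι ι R)
    (I J : ι) {m : ℕ} (K : Fin m → ι) :
    pathProd (Matrix.of fun i j => d i * B i j * d j) I J K
      = d I * d J * (∏ i, d (K i)) ^ 2 * pathProd B I J K := by
  induction m generalizing I with
  | zero => simp [mul_right_comm]
  | succ m ih =>
    cases K using Fin.consCases with
    | cons k K =>
      simp only [pathProd_cons, ih, Fin.prod_univ_succ, Fin.cons_zero, Fin.cons_succ,
        Matrix.of_apply, sq]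
      ac_rfl

lemma Matrix.pow_succ_apply_eq_sum_pathProd [Fintype ι] [DecidableEq ι] [CommSemiring R]
    (B : Matrix ι ι R) (m : ℕ) (I J : ι) :
    (B ^ (m + 1)) I J = ∑ K : Fin m → ι, pathProd B I J K := by
  induction m generalizing I with
  | zero => simp
  | succ m ih =>
    rw [pow_succ', Matrix.mul_apply, ← (Fin.consEquiv fun _ => ι).sum_comp,
      Fintype.sum_prod_type]
    simp [ih, Finset.mul_sum, pathProd_cons, Fin.consEquiv]

end PathProd

theorem masterIntegral_term_bound_general {ι : Type*} [Fintype ι] [DecidableEq ι]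
    (D : ι → ℝ) (hD : ∀ i, 0 < D i)
    (Ahat : Matrix ι ι ℂ)
    (p : ℕ) (hp : 2 ≤ p) (b : Fin p → ℝ) (hb : ∀ j, 0 < b j)
    (m : ℕ) (I J : ι) :
    ∑ K : Fin m → ι,
        Jint (Fin.append (Fin.cons (D I) (Fin.cons (D J) (fun i => D (K i)))) b) *
          pathProd (Matrix.of fun i j => ‖Ahat i j‖) I J K ≤
      Jint (Fin.cons (D I) b) * Real.sqrt (D I / D J) *
        ((Matrix.of fun i j => ‖Ahat i j‖ / Real.sqrt (D i * D j)) ^ (m + 1) : Matrix ι ι ℝ) I J := by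
  set A : Matrix ι ι ℝ := Matrix.of fun i j => ‖Ahat i j‖
  set d : ι → ℝ := fun i => (Real.sqrt (D i))⁻¹
  have hQ : (Matrix.of fun i j => ‖Ahat i j‖ / Real.sqrt (D i * D j))
      = Matrix.of fun i j => d i * A i j * d j := by
    ext i j
    simp only [A, d, Matrix.of_apply, Real.sqrt_mul (hD i).le]
    ring
  rw [hQ, Matrix.pow_succ_apply_eq_sum_pathProd, Finset.mul_sum]
  refine Finset.sum_le_sum fun K _ => ?_
  have hJint := Jint_cons_append_le hp (hD I) (c := Fin.cons (D J) fun i => D (K i))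
    (fun j => Fin.cases (hD J) (fun i => hD (K i)) j) hb
  have hd : (∏ i, d (K i)) ^ 2 = (∏ i, D (K i))⁻¹ := by
    simp only [d, ← Finset.prod_pow, inv_pow, Real.sq_sqrt (hD _).le, Finset.prod_inv_distrib]
  have hsqrt_I : Real.sqrt (D I) ≠ 0 := (Real.sqrt_pos.2 (hD I)).ne'
  have hsqrt_J : Real.sqrt (D J) ^ 2 = D J := Real.sq_sqrt (hD J).le
  rw [Fin.prod_cons] at hJint
  rw [pathProd_diagonal_mul_mul_diagonal, hd, Real.sqrt_div (hD I).le]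
  calc _ ≤ (D J * ∏ i, D (K i))⁻¹ * Jint (Fin.cons (D I) b) * pathProd A I J K :=
        mul_le_mul_of_nonneg_right hJint (pathProd_nonneg (fun i j => norm_nonneg (Ahat i j)) I J K)
    _ = _ := by
        simp only [d]
        field_simp
        rw [hsqrt_J]
        ring

/-- **Bound on the `M`-th order term of the flavour expansion of a master
one-loop integral.**  Let `D : ι → ℝ` be positive, `Â` a Hermitian matrix with
zero diagonal, `p ≥ 2` and `b₁,…,b_p > 0`, and let `Q` be the mass-insertion
matrix `Q_{IJ} = |Â_{IJ}| / √(D_I D_J)`.  Then for every `M = m + 1 ≥ 1` and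
all `I, J`:
`∑_{K₁,…,K_{M−1}} J_{M+1+p}(D_I, D_J, D_{K₁},…,D_{K_{M−1}}, b₁,…,b_p)
   · |Â_{IK₁}| ⋯ |Â_{K_{M−1}J}|
 ≤ J_{1+p}(D_I, b₁,…,b_p) · √(D_I / D_J) · (Q^M)_{IJ}`. -/
theorem masterIntegral_term_bound {ι : Type*} [Fintype ι] [DecidableEq ι]
    (D : ι → ℝ) (hD : ∀ i, 0 < D i)
    (Ahat : Matrix ι ι ℂ) (hH : Ahat.IsHermitian) (hdiag : ∀ i, Ahat i i = 0)
    (p : ℕ) (hp : 2 ≤ p) (b : Fin p → ℝ) (hb : ∀ j, 0 < b j)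
    (m : ℕ) (I J : ι) :
    ∑ K : Fin m → ι,
        Jint (Fin.append (Fin.cons (D I) (Fin.cons (D J) (fun i => D (K i)))) b) *
          pathProd (Matrix.of fun i j => ‖Ahat i j‖) I J K ≤
      Jint (Fin.cons (D I) b) * Real.sqrt (D I / D J) *
        ((Matrix.of fun i j => ‖Ahat i j‖ / Real.sqrt (D i * D j)) ^ (m + 1) : Matrix ι ι ℝ) I J :=
  masterIntegral_term_bound_general D hD Ahat p hp b hb m I J
end
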